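/- arXiv:2503.02225 — 5 statements merged into one kernel-verified Lean document; each statement's English description precedes it below -/
import Mathlib

section
/- (Deterministic Unified SAM.) Let f : ℝ^d → ℝ be differentiable with L-Lipschitz gradient, μ-PL with minimizer x*, and let λ ∈ [0,1]. Define the iterates x^{t+1} = x^t − γ ∇f(x^t + ρ(1 − λ + λ/‖∇f(x^t)‖)∇f(x^t)) (with the convention λ/0 = 0), where ρ ≥ 0 and γ > 0 satisfy L·ρ·(1 + 2(1−λ)²) ≤ 1, 2L(2L²ρ²(1−λ)² + 1)·γ ≤ 1 − L·ρ·(1 + 2(1−λ)²), and γμ ≤ 1. Then for every t ≥ 0, f(x^t) − f(x*) ≤ (1 − γμ)^t (f(x^0) − f(x*)) + L·ρ(1 + 2γL²ρ)·λ²/μ. In particular, for λ = 0 the iterates converge linearly to the exact minimum value, while for λ > 0 the guarantee is only up to a neighborhood of size Lρ(1 + 2γL²ρ)λ²/μ. -/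
/-!
By the descent lemma, the step `-γ ∇f (x + ρ d)` decreases `f` by `γ ⟪∇f x, ∇f (x + ρ d)⟫` up to
a quadratic term. Since `‖d‖ ≤ (1 - λ) ‖∇f x‖ + λ`, smoothness puts `∇f (x + ρ d)` within
`Lρ ((1 - λ) ‖∇f x‖ + λ)` of `∇f x`, and the step-size condition absorbs every error term except
one of order `λ²` into half of the decrease:
`f x⁺ ≤ f x - γ/2 ‖∇f x‖² + γLρ (1 + 2γL²ρ) λ²`.
The PL inequality turns this into the contraction `f x⁺ - f* ≤ (1 - γμ) (f x - f*) + γμ N`, where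
`N` is the size of the neighbourhood, and unrolling it gives the bound.
-/

open scoped NNReal

/-- The unified SAM ascent direction: a convex combination, with weight `lam`, of the plain
gradient `g` and its normalization `g / ‖g‖` (which is `0` at `g = 0`). -/
noncomputable def samDirection {E : Type*} [NormedAddCommGroup E] [NormedSpace ℝ E]
    (lam : ℝ) (g : E) : E :=
  (1 - lam + lam / ‖g‖) • g

theorem norm_samDirection_le {E : Type*} [NormedAddCommGroup E] [NormedSpace ℝ E]
    {lam : ℝ} (hlam0 : 0 ≤ lam) (hlam1 : lam ≤ 1) (g : E) :
    ‖samDirection lam g‖ ≤ (1 - lam) * ‖g‖ + lam := by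
  rcases eq_or_ne g 0 with rfl | hg
  · simpa [samDirection] using hlam0
  · have hcoef : 0 ≤ 1 - lam + lam / ‖g‖ := by
      have := div_nonneg hlam0 (norm_nonneg g)
      linarith
    have hg' : ‖g‖ ≠ 0 := norm_ne_zero_iff.mpr hg
    rw [samDirection, norm_smul, Real.norm_of_nonneg hcoef, add_mul, div_mul_cancel₀ _ hg']

/-- The error-budget inequality behind one SAM step, in terms of `a = ‖∇f x‖` and the
perturbation error `e = ‖∇f (x + ρ d) - ∇f x‖`. -/
theorem sam_error_le {L ρ lam γ a e : ℝ} (hL : 0 ≤ L) (hρ : 0 ≤ ρ) (hγ : 0 ≤ γ) (ha : 0 ≤ a)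
    (he0 : 0 ≤ e) (he : e ≤ L * ρ * ((1 - lam) * a + lam))
    (hγbound : 2 * L * (2 * L ^ 2 * ρ ^ 2 * (1 - lam) ^ 2 + 1) * γ ≤
      1 - L * ρ * (1 + 2 * (1 - lam) ^ 2)) :
    γ * a * e + L * γ ^ 2 * (a ^ 2 + e ^ 2) ≤
      γ / 2 * a ^ 2 + γ * L * ρ * (1 + 2 * γ * L ^ 2 * ρ) * lam ^ 2 := by
  have hLρ : 0 ≤ L * ρ := mul_nonneg hL hρ
  have hae : a * e ≤ L * ρ * (1 - lam) * a ^ 2 + L * ρ * (lam ^ 2 + a ^ 2 / 4) := by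
    nlinarith [mul_le_mul_of_nonneg_left he ha, mul_nonneg hLρ (sq_nonneg (lam - a / 2))]
  have he2 : e ^ 2 ≤ 2 * L ^ 2 * ρ ^ 2 * (1 - lam) ^ 2 * a ^ 2 + 2 * L ^ 2 * ρ ^ 2 * lam ^ 2 := by
    nlinarith [pow_le_pow_left₀ he0 he 2, sq_nonneg (L * ρ * ((1 - lam) * a - lam))]
  -- `(1 - lam) + 1/4 ≤ (1 + 2 (1 - lam)²) / 2` is `0 ≤ 2 ((1 - lam) - 1/2)²`
  have hcoef : L * ρ * (1 - lam) + L * ρ / 4 + L * γ * (1 + 2 * L ^ 2 * ρ ^ 2 * (1 - lam) ^ 2)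
      ≤ 1 / 2 := by
    nlinarith [mul_nonneg hLρ (sq_nonneg ((1 - lam) - 1 / 2))]
  nlinarith [mul_le_mul_of_nonneg_left hae hγ, mul_le_mul_of_nonneg_left he2
    (by positivity : 0 ≤ L * γ ^ 2), mul_le_mul_of_nonneg_right hcoef
    (by positivity : 0 ≤ γ * a ^ 2)]

theorem le_pow_mul_add_of_le_mul_add {a : ℕ → ℝ} {q C : ℝ} (hq : 0 ≤ q) (hC : 0 ≤ C)
    (h : ∀ t, a (t + 1) ≤ q * a t + (1 - q) * C) (t : ℕ) : a t ≤ q ^ t * a 0 + C := by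
  induction t with
  | zero => simpa using hC
  | succ t ih =>
    calc a (t + 1) ≤ q * a t + (1 - q) * C := h t
      _ ≤ q * (q ^ t * a 0 + C) + (1 - q) * C := by gcongr
      _ = q ^ (t + 1) * a 0 + C := by ring

section Gradient

variable {E : Type*} [NormedAddCommGroup E] [InnerProductSpace ℝ E] [CompleteSpace E]
  {f : E → ℝ} {K : ℝ≥0}

theorem hasDerivAt_comp_add_smul (hf : Differentiable ℝ f) (x v : E) (t : ℝ) :
    HasDerivAt (fun s : ℝ => f (x + s • v)) (inner ℝ (gradient f (x + t • v)) v) t := by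
  have hline : HasDerivAt (fun s : ℝ => x + s • v) v t := by
    simpa using ((hasDerivAt_id t).smul_const v).const_add x
  rw [inner_gradient_left]
  exact (hf _).hasFDerivAt.comp_hasDerivAt t hline

theorem le_add_inner_gradient_add_of_lipschitzWith_gradient (hf : Differentiable ℝ f)
    (hsmooth : LipschitzWith K (gradient f)) (x y : E) :
    f y ≤ f x + inner ℝ (gradient f x) (y - x) + K / 2 * ‖y - x‖ ^ 2 := by
  set v := y - x
  set φ : ℝ → ℝ := fun t => f (x + t • v) - t * inner ℝ (gradient f x) v - K / 2 * t ^ 2 * ‖v‖ ^ 2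
  have hφ : ∀ t, HasDerivAt φ
      (inner ℝ (gradient f (x + t • v) - gradient f x) v - K * t * ‖v‖ ^ 2) t := by
    intro t
    have := ((hasDerivAt_comp_add_smul hf x v t).sub ((hasDerivAt_id t).mul_const
      (inner ℝ (gradient f x) v))).sub
        (((hasDerivAt_pow 2 t).const_mul (K / 2 : ℝ)).mul_const (‖v‖ ^ 2))
    refine this.congr_deriv ?_
    rw [inner_sub_left]
    ring
  have hanti : AntitoneOn φ (Set.Icc 0 1) := by
    refine antitoneOn_of_hasDerivWithinAt_nonpos (convex_Icc 0 1)
      (fun t _ => (hφ t).continuousAt.continuousWithinAt) (fun t _ => (hφ t).hasDerivWithinAt) ?_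
    rintro t ht
    rw [interior_Icc] at ht
    have hlip : ‖gradient f (x + t • v) - gradient f x‖ ≤ K * (t * ‖v‖) := by
      simpa [dist_eq_norm, norm_smul, abs_of_pos ht.1] using hsmooth.dist_le_mul (x + t • v) x
    have := calc inner ℝ (gradient f (x + t • v) - gradient f x) v
        ≤ ‖gradient f (x + t • v) - gradient f x‖ * ‖v‖ := real_inner_le_norm _ _
      _ ≤ K * (t * ‖v‖) * ‖v‖ := by gcongr
      _ = K * t * ‖v‖ ^ 2 := by ring
    linarith
  have := hanti (by simp) (by simp) zero_le_one
  simp only [φ, one_smul, zero_smul, add_zero, v, add_sub_cancel] at this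
  linarith

theorem sam_step_le (hf : Differentiable ℝ f) (hsmooth : LipschitzWith K (gradient f))
    {lam ρ γ : ℝ} (hlam0 : 0 ≤ lam) (hlam1 : lam ≤ 1) (hρ : 0 ≤ ρ) (hγ : 0 ≤ γ)
    (hγbound : 2 * K * (2 * K ^ 2 * ρ ^ 2 * (1 - lam) ^ 2 + 1) * γ ≤
      1 - K * ρ * (1 + 2 * (1 - lam) ^ 2)) (x : E) :
    f (x - γ • gradient f (x + ρ • samDirection lam (gradient f x))) ≤
      f x - γ / 2 * ‖gradient f x‖ ^ 2 + γ * K * ρ * (1 + 2 * γ * K ^ 2 * ρ) * lam ^ 2 := by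
  set g := gradient f x
  set h := gradient f (x + ρ • samDirection lam g)
  have he : ‖h - g‖ ≤ K * ρ * ((1 - lam) * ‖g‖ + lam) := calc
    ‖h - g‖ ≤ K * ‖ρ • samDirection lam g‖ := by
      simpa [dist_eq_norm] using hsmooth.dist_le_mul (x + ρ • samDirection lam g) x
    _ ≤ K * ρ * ((1 - lam) * ‖g‖ + lam) := by
      rw [norm_smul, Real.norm_of_nonneg hρ, mul_assoc]
      gcongr
      exact norm_samDirection_le hlam0 hlam1 g
  have hinner : ‖g‖ ^ 2 - ‖g‖ * ‖h - g‖ ≤ inner ℝ g h := by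
    have := real_inner_le_norm g (g - h)
    rw [inner_sub_right, real_inner_self_eq_norm_sq, norm_sub_rev] at this
    linarith
  have hnorm : ‖h‖ ^ 2 ≤ 2 * (‖g‖ ^ 2 + ‖h - g‖ ^ 2) := by
    have := norm_add_le g (h - g)
    rw [add_sub_cancel] at this
    nlinarith [norm_nonneg h, sq_nonneg (‖g‖ - ‖h - g‖)]
  have hdescent := le_add_inner_gradient_add_of_lipschitzWith_gradient hf hsmooth x (x - γ • h)
  rw [sub_sub_cancel_left, inner_neg_right, real_inner_smul_right, norm_neg, norm_smul,
    Real.norm_of_nonneg hγ] at hdescent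
  have := sam_error_le K.coe_nonneg hρ hγ (norm_nonneg g) (norm_nonneg _) he hγbound
  nlinarith [mul_le_mul_of_nonneg_left hinner hγ,
    mul_le_mul_of_nonneg_left hnorm (by positivity : 0 ≤ (K : ℝ) / 2 * γ ^ 2)]

end Gradient

theorem deterministic_unifiedSAM_PL_general
    {d : ℕ} (f : EuclideanSpace ℝ (Fin d) → ℝ)
    (hdiff : Differentiable ℝ f)
    (L : ℝ) (hL : 0 ≤ L)
    (hsmooth : LipschitzWith L.toNNReal (gradient f))
    (μ : ℝ) (hμ : 0 < μ)
    (xstar : EuclideanSpace ℝ (Fin d))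
    (hPL : ∀ x, 2 * μ * (f x - f xstar) ≤ ‖gradient f x‖ ^ 2)
    (lam : ℝ) (hlam0 : 0 ≤ lam) (hlam1 : lam ≤ 1)
    (ρ γ : ℝ) (hρ : 0 ≤ ρ) (hγ : 0 < γ)
    (hγbound : 2 * L * (2 * L ^ 2 * ρ ^ 2 * (1 - lam) ^ 2 + 1) * γ ≤
      1 - L * ρ * (1 + 2 * (1 - lam) ^ 2))
    (hγμ : γ * μ ≤ 1)
    (x : ℕ → EuclideanSpace ℝ (Fin d))
    (hxrec : ∀ t, x (t + 1) = x t - γ •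
      gradient f (x t + ρ • ((1 - lam + lam / ‖gradient f (x t)‖) • gradient f (x t)))) :
    ∀ t : ℕ, f (x t) - f xstar ≤
      (1 - γ * μ) ^ t * (f (x 0) - f xstar) + L * ρ * (1 + 2 * γ * L ^ 2 * ρ) * lam ^ 2 / μ := by
  have hK : (L.toNNReal : ℝ) = L := Real.coe_toNNReal L hL
  refine le_pow_mul_add_of_le_mul_add (by linarith) (by positivity) fun t => ?_
  have hstep := sam_step_le hdiff hsmooth hlam0 hlam1 hρ hγ.le (by rwa [hK]) (x t)
  rw [hK, samDirection, ← hxrec t] at hstep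
  have hdecrease := mul_le_mul_of_nonneg_left (hPL (x t)) hγ.le
  have hneighbourhood : (1 - (1 - γ * μ)) * (L * ρ * (1 + 2 * γ * L ^ 2 * ρ) * lam ^ 2 / μ) =
      γ * L * ρ * (1 + 2 * γ * L ^ 2 * ρ) * lam ^ 2 := by
    field_simp
    ring
  rw [hneighbourhood]
  linarith

/-- **Corollary (deterministic Unified SAM for PL functions).**
Note that in Lean `lam / ‖(0 : E)‖ = lam / 0 = 0`, which matches the convention `λ/0 = 0`. -/
theorem deterministic_unifiedSAM_PL
    {d : ℕ} (f : EuclideanSpace ℝ (Fin d) → ℝ)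
    (hdiff : Differentiable ℝ f)
    (L : ℝ) (hL : 0 ≤ L)
    (hsmooth : LipschitzWith L.toNNReal (gradient f))
    (μ : ℝ) (hμ : 0 < μ)
    (xstar : EuclideanSpace ℝ (Fin d)) (hmin : ∀ y, f xstar ≤ f y)
    (hPL : ∀ x, 2 * μ * (f x - f xstar) ≤ ‖gradient f x‖ ^ 2)
    (lam : ℝ) (hlam0 : 0 ≤ lam) (hlam1 : lam ≤ 1)
    (ρ γ : ℝ) (hρ : 0 ≤ ρ) (hγ : 0 < γ)
    (hρbound : L * ρ * (1 + 2 * (1 - lam) ^ 2) ≤ 1)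
    (hγbound : 2 * L * (2 * L ^ 2 * ρ ^ 2 * (1 - lam) ^ 2 + 1) * γ ≤
      1 - L * ρ * (1 + 2 * (1 - lam) ^ 2))
    (hγμ : γ * μ ≤ 1)
    (x : ℕ → EuclideanSpace ℝ (Fin d))
    (hxrec : ∀ t, x (t + 1) = x t - γ •
      gradient f (x t + ρ • ((1 - lam + lam / ‖gradient f (x t)‖) • gradient f (x t)))) :
    ∀ t : ℕ, f (x t) - f xstar ≤
      (1 - γ * μ) ^ t * (f (x 0) - f xstar) + L * ρ * (1 + 2 * γ * L ^ 2 * ρ) * lam ^ 2 / μ :=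
  deterministic_unifiedSAM_PL_general f hdiff L hL hsmooth μ hμ xstar hPL lam hlam0 hlam1 ρ γ hρ hγ
    hγbound hγμ x hxrec
end

section
/- (Second-moment bound for the perturbed stochastic gradient.) Fix x ∈ ℝ^d, ρ ≥ 0, and λ ∈ [0,1]. Then E_v‖g(x + ρ(1 − λ + λ/‖g(x,v)‖)·g(x,v), v)‖² ≤ 4L_max²ρ²λ² + 2(2L_max²ρ²(1−λ)² + 1)·E_v‖g(x,v)‖², where the convention λ/0 = 0 is used when g(x,v) = 0. -/
/-!
The perturbed point `y = x + ρ c g` with `g = g(x, v)` and `c = 1 - λ + λ/‖g‖` lies at distance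
`ρ c ‖g‖ ≤ ρ ((1 - λ)‖g‖ + λ)` from `x`, so Lipschitz continuity of `g(·, v)` gives
`‖g(y, v)‖ ≤ ‖g‖ + L ρ ((1 - λ)‖g‖ + λ)`. Squaring with `(a + b)² ≤ 2a² + 2b²` twice yields the
bound pointwise in `v`, and integrating it gives the claim.
-/

open MeasureTheory NNReal

noncomputable section

/-- The finite-sum objective `f(x) = (1/n) ∑ i, f i x`. -/
def favg {n d : ℕ} (f : Fin n → EuclideanSpace ℝ (Fin d) → ℝ)
    (x : EuclideanSpace ℝ (Fin d)) : ℝ :=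
  (n : ℝ)⁻¹ * ∑ i, f i x

/-- The stochastic gradient `g(x, v) = (1/n) ∑ i, v i • ∇ f i x`. -/
def sgrad {n d : ℕ} (f : Fin n → EuclideanSpace ℝ (Fin d) → ℝ)
    (x : EuclideanSpace ℝ (Fin d)) (v : Fin n → ℝ) : EuclideanSpace ℝ (Fin d) :=
  (n : ℝ)⁻¹ • ∑ i, v i • gradient (f i) x

theorem norm_perturbation_smul_le {E : Type*} [NormedAddCommGroup E] [NormedSpace ℝ E]
    (g : E) {lam : ℝ} (hlam0 : 0 ≤ lam) (hlam1 : lam ≤ 1) :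
    ‖(1 - lam + lam / ‖g‖) • g‖ ≤ (1 - lam) * ‖g‖ + lam := by
  rcases eq_or_ne ‖g‖ 0 with hg | hg
  · obtain rfl := norm_eq_zero.mp hg
    simpa using hlam0
  · have hc : 0 ≤ 1 - lam + lam / ‖g‖ := by positivity
    rw [norm_smul, Real.norm_of_nonneg hc, add_mul, div_mul_cancel₀ _ hg]

theorem LipschitzWith.norm_le_norm_add_mul_norm_sub {E F : Type*} [SeminormedAddCommGroup E]
    [SeminormedAddCommGroup F] {K : ℝ≥0} {G : E → F} (hG : LipschitzWith K G) (x y : E) :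
    ‖G y‖ ≤ ‖G x‖ + K * ‖y - x‖ := by
  calc ‖G y‖ ≤ ‖G x‖ + ‖G y - G x‖ := norm_le_norm_add_norm_sub' (G y) (G x)
    _ ≤ ‖G x‖ + K * ‖y - x‖ := by
      gcongr
      simpa only [dist_eq_norm] using hG.dist_le_mul y x

theorem LipschitzWith.norm_sq_perturbed_le {E : Type*} [NormedAddCommGroup E] [NormedSpace ℝ E]
    {K : ℝ≥0} {G : E → E} (hG : LipschitzWith K G) (x : E) {ρ lam : ℝ} (hρ : 0 ≤ ρ)
    (hlam0 : 0 ≤ lam) (hlam1 : lam ≤ 1) :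
    ‖G (x + ρ • ((1 - lam + lam / ‖G x‖) • G x))‖ ^ 2 ≤
      4 * K ^ 2 * ρ ^ 2 * lam ^ 2 + 2 * (2 * K ^ 2 * ρ ^ 2 * (1 - lam) ^ 2 + 1) * ‖G x‖ ^ 2 := by
  set g := G x
  have hstep : ‖ρ • ((1 - lam + lam / ‖g‖) • g)‖ ≤ ρ * ((1 - lam) * ‖g‖ + lam) := by
    rw [norm_smul, Real.norm_of_nonneg hρ]
    exact mul_le_mul_of_nonneg_left (norm_perturbation_smul_le g hlam0 hlam1) hρ
  have hnorm : ‖G (x + ρ • ((1 - lam + lam / ‖g‖) • g))‖ ≤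
      ‖g‖ + K * (ρ * ((1 - lam) * ‖g‖ + lam)) := by
    refine (hG.norm_le_norm_add_mul_norm_sub x _).trans ?_
    rw [add_sub_cancel_left]
    gcongr
  calc ‖G (x + ρ • ((1 - lam + lam / ‖g‖) • g))‖ ^ 2
      ≤ (‖g‖ + K * ρ * ((1 - lam) * ‖g‖) + K * ρ * lam) ^ 2 := by
        gcongr
        linarith
    _ ≤ 2 * (‖g‖ ^ 2 + (K * ρ * ((1 - lam) * ‖g‖) + K * ρ * lam) ^ 2) := by
        rw [add_assoc]
        exact add_sq_le
    _ ≤ 2 * (‖g‖ ^ 2 + 2 * ((K * ρ * ((1 - lam) * ‖g‖)) ^ 2 + (K * ρ * lam) ^ 2)) := by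
        gcongr
        exact add_sq_le
    _ = _ := by ring

theorem integral_le_const_add_mul_integral_of_ae_le {α : Type*} [MeasurableSpace α]
    {μ : Measure α} [IsProbabilityMeasure μ] {F G : α → ℝ} {a b : ℝ}
    (hF : Integrable F μ) (hG : Integrable G μ) (hle : ∀ᵐ v ∂μ, F v ≤ a + b * G v) :
    ∫ v, F v ∂μ ≤ a + b * ∫ v, G v ∂μ := by
  calc ∫ v, F v ∂μ ≤ ∫ v, (a + b * G v) ∂μ :=
        integral_mono_ae hF ((integrable_const a).add (hG.const_mul b)) hle
    _ = a + b * ∫ v, G v ∂μ := by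
        rw [integral_add (integrable_const a) (hG.const_mul b), integral_const, integral_const_mul,
          probReal_univ, one_smul]

theorem Real.coe_toNNReal_sq_le (r : ℝ) : (r.toNNReal : ℝ) ^ 2 ≤ r ^ 2 := by
  rcases le_total 0 r with hr | hr
  · rw [Real.coe_toNNReal r hr]
  · simpa [Real.toNNReal_of_nonpos hr] using sq_nonneg r

theorem perturbed_sgrad_second_moment_general
    {d n : ℕ}
    (f : Fin n → EuclideanSpace ℝ (Fin d) → ℝ)
    (Lmax : ℝ)
    (𝒟 : Measure (Fin n → ℝ)) [IsProbabilityMeasure 𝒟]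
    (hglip : ∀ᵐ v ∂𝒟, LipschitzWith Lmax.toNNReal (fun x => sgrad f x v))
    (x : EuclideanSpace ℝ (Fin d)) (ρ : ℝ) (hρ : 0 ≤ ρ)
    (lam : ℝ) (hlam0 : 0 ≤ lam) (hlam1 : lam ≤ 1)
    -- the stated expectations exist
    (hint1 : Integrable (fun v => ‖sgrad f x v‖ ^ 2) 𝒟)
    (hint2 : Integrable (fun v =>
      ‖sgrad f (x + ρ • ((1 - lam + lam / ‖sgrad f x v‖) • sgrad f x v)) v‖ ^ 2) 𝒟) :
    ∫ v, ‖sgrad f (x + ρ • ((1 - lam + lam / ‖sgrad f x v‖) • sgrad f x v)) v‖ ^ 2 ∂𝒟 ≤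
      4 * Lmax ^ 2 * ρ ^ 2 * lam ^ 2 +
      2 * (2 * Lmax ^ 2 * ρ ^ 2 * (1 - lam) ^ 2 + 1) * ∫ v, ‖sgrad f x v‖ ^ 2 ∂𝒟 := by
  set K := Lmax.toNNReal
  have hK : (K : ℝ) ^ 2 ≤ Lmax ^ 2 := Real.coe_toNNReal_sq_le Lmax
  have hmoment : 0 ≤ ∫ v, ‖sgrad f x v‖ ^ 2 ∂𝒟 := integral_nonneg fun v => by positivity
  calc _ ≤ 4 * K ^ 2 * ρ ^ 2 * lam ^ 2 +
        2 * (2 * K ^ 2 * ρ ^ 2 * (1 - lam) ^ 2 + 1) * ∫ v, ‖sgrad f x v‖ ^ 2 ∂𝒟 := by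
        refine integral_le_const_add_mul_integral_of_ae_le hint2 hint1 ?_
        filter_upwards [hglip] with v hv
        exact hv.norm_sq_perturbed_le x hρ hlam0 hlam1
    _ ≤ _ := by
        have hlam : 0 ≤ 1 - lam := by linarith
        gcongr

/-- **Lemma (second-moment bound for the perturbed stochastic gradient).**
Note that in Lean `lam / ‖(0 : E)‖ = lam / 0 = 0`, matching the convention `λ/0 = 0`. -/
theorem perturbed_sgrad_second_moment
    {d n : ℕ} (hn : 0 < n)
    (f : Fin n → EuclideanSpace ℝ (Fin d) → ℝ)
    (L : Fin n → ℝ) (hLnonneg : ∀ i, 0 ≤ L i)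
    (hdiff : ∀ i, Differentiable ℝ (f i))
    (hsmooth : ∀ i, LipschitzWith (L i).toNNReal (gradient (f i)))
    (Lmax : ℝ) (hLmax_ub : ∀ i, L i ≤ Lmax) (hLmax_mem : ∃ i, L i = Lmax)
    (𝒟 : Measure (Fin n → ℝ)) [IsProbabilityMeasure 𝒟]
    (hunbiased : ∀ i, ∫ v, v i ∂𝒟 = 1)
    (hglip : ∀ᵐ v ∂𝒟, LipschitzWith Lmax.toNNReal (fun x => sgrad f x v))
    (x : EuclideanSpace ℝ (Fin d)) (ρ : ℝ) (hρ : 0 ≤ ρ)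
    (lam : ℝ) (hlam0 : 0 ≤ lam) (hlam1 : lam ≤ 1)
    -- the stated expectations exist
    (hint1 : Integrable (fun v => ‖sgrad f x v‖ ^ 2) 𝒟)
    (hint2 : Integrable (fun v =>
      ‖sgrad f (x + ρ • ((1 - lam + lam / ‖sgrad f x v‖) • sgrad f x v)) v‖ ^ 2) 𝒟) :
    ∫ v, ‖sgrad f (x + ρ • ((1 - lam + lam / ‖sgrad f x v‖) • sgrad f x v)) v‖ ^ 2 ∂𝒟 ≤
      4 * Lmax ^ 2 * ρ ^ 2 * lam ^ 2 +
      2 * (2 * Lmax ^ 2 * ρ ^ 2 * (1 - lam) ^ 2 + 1) * ∫ v, ‖sgrad f x v‖ ^ 2 ∂𝒟 :=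
  perturbed_sgrad_second_moment_general f Lmax 𝒟 hglip x ρ hρ lam hlam0 hlam1 hint1 hint2

end
end

section
/- (Inner-product lower bound for the perturbed stochastic gradient.) Fix x ∈ ℝ^d, ρ ≥ 0, λ ∈ [0,1], and β > 0. Then E_v⟨g(x + ρ(1 − λ + λ/‖g(x,v)‖)·g(x,v), v), ∇f(x)⟩ ≥ (1 − β/2)‖∇f(x)‖² − L_max²ρ²λ²/β − (L_max²ρ²(1−λ)²/β)·E_v‖g(x,v)‖², where the convention λ/0 = 0 is used when g(x,v) = 0. In particular, taking β = L_max·ρ (when ρ > 0) gives E_v⟨g(x + ρ(1 − λ + λ/‖g(x,v)‖)g(x,v), v), ∇f(x)⟩ ≥ (1 − L_maxρ/2)‖∇f(x)‖² − L_maxρλ² − L_maxρ(1−λ)²·E_v‖g(x,v)‖². -/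
open MeasureTheory

noncomputable section

open Filter Topology

/-! Write `g = g(x, v)`, `G = ∇f(x)` and `y = x + ρ(1 - λ + λ/‖g‖) g`. The step `y - x` has length at
most `|ρ| (|λ| + |1 - λ| ‖g‖)`, so by the Lipschitz property `⟪g(y, v), G⟫` is at least
`⟪g, G⟫ - L|ρ| (|λ| + |1 - λ| ‖g‖) ‖G‖`. Young's inequality splits each error term into `β/4 ‖G‖²`
plus a term of order `1/β`, and taking expectations turns `⟪g, G⟫` into `‖G‖²` by unbiasedness.
When `Lρ = 0` the choice `β = Lρ` is replaced by the limit `β → 0`. -/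

lemma mul_le_div_four_mul_sq_add_sq_div {a b β : ℝ} (hβ : 0 < β) :
    a * b ≤ β / 4 * a ^ 2 + b ^ 2 / β := by
  have key : β / 4 * a ^ 2 + b ^ 2 / β - a * b = (β * a - 2 * b) ^ 2 / (4 * β) := by
    field_simp
    ring
  linarith [key, show 0 ≤ (β * a - 2 * b) ^ 2 / (4 * β) by positivity]

lemma le_of_forall_pos_sq_div_bound {c p q m K r : ℝ} (hK : 0 ≤ K)
    (h : ∀ β > 0, (1 - β / 2) * c - K ^ 2 * p / β - K ^ 2 * q / β * m ≤ r) :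
    (1 - K / 2) * c - K * p - K * q * m ≤ r := by
  rcases hK.eq_or_lt with rfl | hKpos
  · have hlim : Tendsto (fun β : ℝ => (1 - β / 2) * c) (𝓝[>] 0) (𝓝 ((1 - 0 / 2) * c)) :=
      ((by fun_prop : Continuous fun β : ℝ => (1 - β / 2) * c).tendsto 0).mono_left
        nhdsWithin_le_nhds
    simpa using le_of_tendsto hlim (eventually_nhdsWithin_of_forall fun β hβ => by
      simpa using h β hβ)
  · convert h K hKpos using 3 <;> field_simp

section NormedSpace

variable {E : Type*} [SeminormedAddCommGroup E] [NormedSpace ℝ E]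

lemma norm_add_div_norm_smul_le (s t : ℝ) (u : E) :
    ‖(s + t / ‖u‖) • u‖ ≤ |t| + |s| * ‖u‖ := by
  have hstep : |t| / ‖u‖ * ‖u‖ ≤ |t| := by
    rcases eq_or_ne ‖u‖ 0 with hu | hu
    · simp [hu]
    · rw [div_mul_cancel₀ _ hu]
  calc ‖(s + t / ‖u‖) • u‖ ≤ ‖s • u‖ + ‖(t / ‖u‖) • u‖ := by
        rw [add_smul]
        exact norm_add_le _ _
    _ = |s| * ‖u‖ + |t| / ‖u‖ * ‖u‖ := by
        rw [norm_smul, norm_smul, Real.norm_eq_abs, Real.norm_eq_abs, abs_div, abs_norm]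
    _ ≤ |t| + |s| * ‖u‖ := by linarith

lemma LipschitzWith.norm_sub_le_of_add_div_norm_smul {F : Type*} [SeminormedAddCommGroup F]
    {φ : E → F} {K : NNReal} (hφ : LipschitzWith K φ) (x u : E) (ρ s t : ℝ) :
    ‖φ (x + ρ • ((s + t / ‖u‖) • u)) - φ x‖ ≤ K * |ρ| * |t| + K * |ρ| * |s| * ‖u‖ := by
  calc ‖φ (x + ρ • ((s + t / ‖u‖) • u)) - φ x‖ ≤ K * ‖ρ • ((s + t / ‖u‖) • u)‖ := by
        simpa only [add_sub_cancel_left] using hφ.norm_sub_le (x + ρ • ((s + t / ‖u‖) • u)) x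
    _ ≤ K * (|ρ| * (|t| + |s| * ‖u‖)) := by
        rw [norm_smul, Real.norm_eq_abs]
        gcongr
        exact norm_add_div_norm_smul_le s t u
    _ = K * |ρ| * |t| + K * |ρ| * |s| * ‖u‖ := by ring

end NormedSpace

section InnerProduct

variable {E : Type*} [NormedAddCommGroup E] [InnerProductSpace ℝ E]

lemma inner_ge_of_norm_sub_le {u w G : E} {a b β : ℝ} (hβ : 0 < β)
    (hdev : ‖w - u‖ ≤ a + b * ‖u‖) :
    inner ℝ u G - (β / 2 * ‖G‖ ^ 2 + a ^ 2 / β) - b ^ 2 / β * ‖u‖ ^ 2 ≤ inner ℝ w G := by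
  have hcs : inner ℝ (u - w) G ≤ (a + b * ‖u‖) * ‖G‖ := by
    calc inner ℝ (u - w) G ≤ ‖u - w‖ * ‖G‖ := real_inner_le_norm _ _
      _ ≤ (a + b * ‖u‖) * ‖G‖ := by
        rw [norm_sub_rev]
        exact mul_le_mul_of_nonneg_right hdev (norm_nonneg G)
  have young_a := mul_le_div_four_mul_sq_add_sq_div (a := ‖G‖) (b := a) hβ
  have young_b := mul_le_div_four_mul_sq_add_sq_div (a := ‖G‖) (b := b * ‖u‖) hβ
  rw [inner_sub_left] at hcs
  have hsq : (b * ‖u‖) ^ 2 / β = b ^ 2 / β * ‖u‖ ^ 2 := by ring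
  linarith

variable [CompleteSpace E] {α : Type*} [MeasurableSpace α] {μ : Measure α}

lemma integral_inner_eq_norm_sq_of_integral_eq {g : α → E} {G : E} (hg : Integrable g μ)
    (hmean : ∫ v, g v ∂μ = G) :
    ∫ v, inner ℝ (g v) G ∂μ = ‖G‖ ^ 2 := by
  simp_rw [real_inner_comm G]
  rw [integral_inner hg, hmean, real_inner_self_eq_norm_sq]

lemma integral_inner_ge_of_norm_sub_le [IsProbabilityMeasure μ] {g h : α → E} {G : E}
    {a b β : ℝ} (hβ : 0 < β) (hdev : ∀ᵐ v ∂μ, ‖h v - g v‖ ≤ a + b * ‖g v‖)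
    (hg : Integrable g μ) (hmean : ∫ v, g v ∂μ = G)
    (hg2 : Integrable (fun v => ‖g v‖ ^ 2) μ) (hh : Integrable (fun v => inner ℝ (h v) G) μ) :
    (1 - β / 2) * ‖G‖ ^ 2 - a ^ 2 / β - b ^ 2 / β * ∫ v, ‖g v‖ ^ 2 ∂μ ≤
      ∫ v, inner ℝ (h v) G ∂μ := by
  have hinner := hg.inner_const (𝕜 := ℝ) G
  have hconst := integrable_const (μ := μ) (β / 2 * ‖G‖ ^ 2 + a ^ 2 / β)
  have hshift : Integrable (fun v => inner ℝ (g v) G - (β / 2 * ‖G‖ ^ 2 + a ^ 2 / β)) μ :=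
    hinner.sub hconst
  calc (1 - β / 2) * ‖G‖ ^ 2 - a ^ 2 / β - b ^ 2 / β * ∫ v, ‖g v‖ ^ 2 ∂μ
      = ∫ v, (inner ℝ (g v) G - (β / 2 * ‖G‖ ^ 2 + a ^ 2 / β) - b ^ 2 / β * ‖g v‖ ^ 2) ∂μ := by
        rw [integral_sub hshift (hg2.const_mul _), integral_sub hinner hconst,
          integral_const_mul, integral_inner_eq_norm_sq_of_integral_eq hg hmean, integral_const,
          probReal_univ, one_smul]
        ring
    _ ≤ ∫ v, inner ℝ (h v) G ∂μ :=
        integral_mono_ae (hshift.sub (hg2.const_mul _)) hh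
          (hdev.mono fun v hv => inner_ge_of_norm_sub_le hβ hv)

end InnerProduct

theorem perturbed_sgrad_inner_product_general
    {d n : ℕ}
    (f : Fin n → EuclideanSpace ℝ (Fin d) → ℝ)
    (L : Fin n → ℝ) (hLnonneg : ∀ i, 0 ≤ L i)
    (Lmax : ℝ) (hLmax_mem : ∃ i, L i = Lmax)
    (𝒟 : Measure (Fin n → ℝ)) [IsProbabilityMeasure 𝒟]
    (hglip : ∀ᵐ v ∂𝒟, LipschitzWith Lmax.toNNReal (fun x => sgrad f x v))
    (x : EuclideanSpace ℝ (Fin d)) (ρ : ℝ)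
    (lam : ℝ)
    (β : ℝ) (hβ : 0 < β)
    -- the stated expectations exist, and the stochastic gradient is unbiased at `x`
    (hint1 : Integrable (fun v => ‖sgrad f x v‖ ^ 2) 𝒟)
    (hint2 : Integrable (fun v =>
      (inner ℝ (sgrad f (x + ρ • ((1 - lam + lam / ‖sgrad f x v‖) • sgrad f x v)) v)
        (gradient (favg f) x) : ℝ)) 𝒟)
    (hgint : Integrable (fun v => sgrad f x v) 𝒟)
    (hgmean : ∫ v, sgrad f x v ∂𝒟 = gradient (favg f) x) :
    (∫ v, (inner ℝ (sgrad f (x + ρ • ((1 - lam + lam / ‖sgrad f x v‖) • sgrad f x v)) v)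
        (gradient (favg f) x) : ℝ) ∂𝒟 ≥
      (1 - β / 2) * ‖gradient (favg f) x‖ ^ 2 - Lmax ^ 2 * ρ ^ 2 * lam ^ 2 / β -
      Lmax ^ 2 * ρ ^ 2 * (1 - lam) ^ 2 / β * ∫ v, ‖sgrad f x v‖ ^ 2 ∂𝒟) ∧
    (0 < ρ →
      ∫ v, (inner ℝ (sgrad f (x + ρ • ((1 - lam + lam / ‖sgrad f x v‖) • sgrad f x v)) v)
        (gradient (favg f) x) : ℝ) ∂𝒟 ≥
      (1 - Lmax * ρ / 2) * ‖gradient (favg f) x‖ ^ 2 - Lmax * ρ * lam ^ 2 -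
      Lmax * ρ * (1 - lam) ^ 2 * ∫ v, ‖sgrad f x v‖ ^ 2 ∂𝒟) := by
  obtain ⟨i, hi⟩ := hLmax_mem
  have hL : 0 ≤ Lmax := hi ▸ hLnonneg i
  set G := gradient (favg f) x
  have hdev : ∀ᵐ v ∂𝒟,
      ‖sgrad f (x + ρ • ((1 - lam + lam / ‖sgrad f x v‖) • sgrad f x v)) v - sgrad f x v‖ ≤
        Lmax * |ρ| * |lam| + Lmax * |ρ| * |1 - lam| * ‖sgrad f x v‖ := by
    filter_upwards [hglip] with v hv
    have := hv.norm_sub_le_of_add_div_norm_smul x (sgrad f x v) ρ (1 - lam) lam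
    rwa [Real.coe_toNNReal _ hL] at this
  have key : ∀ β > 0, (1 - β / 2) * ‖G‖ ^ 2 - Lmax ^ 2 * ρ ^ 2 * lam ^ 2 / β -
      Lmax ^ 2 * ρ ^ 2 * (1 - lam) ^ 2 / β * ∫ v, ‖sgrad f x v‖ ^ 2 ∂𝒟 ≤
      ∫ v, inner ℝ (sgrad f (x + ρ • ((1 - lam + lam / ‖sgrad f x v‖) • sgrad f x v)) v) G ∂𝒟 :=
    fun β hβ => by
      simpa only [mul_pow, sq_abs] using
        integral_inner_ge_of_norm_sub_le hβ hdev hgint hgmean hint1 hint2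
  exact ⟨key β hβ, fun hρpos => le_of_forall_pos_sq_div_bound (mul_nonneg hL hρpos.le)
    fun β hβ => by simpa only [mul_pow] using key β hβ⟩

/-- **Lemma (inner-product lower bound for the perturbed stochastic gradient).**
Note that in Lean `lam / ‖(0 : E)‖ = lam / 0 = 0`, matching the convention `λ/0 = 0`. -/
theorem perturbed_sgrad_inner_product
    {d n : ℕ} (hn : 0 < n)
    (f : Fin n → EuclideanSpace ℝ (Fin d) → ℝ)
    (L : Fin n → ℝ) (hLnonneg : ∀ i, 0 ≤ L i)
    (hdiff : ∀ i, Differentiable ℝ (f i))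
    (hsmooth : ∀ i, LipschitzWith (L i).toNNReal (gradient (f i)))
    (Lmax : ℝ) (hLmax_ub : ∀ i, L i ≤ Lmax) (hLmax_mem : ∃ i, L i = Lmax)
    (𝒟 : Measure (Fin n → ℝ)) [IsProbabilityMeasure 𝒟]
    (hunbiased : ∀ i, ∫ v, v i ∂𝒟 = 1)
    (hglip : ∀ᵐ v ∂𝒟, LipschitzWith Lmax.toNNReal (fun x => sgrad f x v))
    (x : EuclideanSpace ℝ (Fin d)) (ρ : ℝ) (hρ : 0 ≤ ρ)
    (lam : ℝ) (hlam0 : 0 ≤ lam) (hlam1 : lam ≤ 1)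
    (β : ℝ) (hβ : 0 < β)
    -- the stated expectations exist, and the stochastic gradient is unbiased at `x`
    (hint1 : Integrable (fun v => ‖sgrad f x v‖ ^ 2) 𝒟)
    (hint2 : Integrable (fun v =>
      (inner ℝ (sgrad f (x + ρ • ((1 - lam + lam / ‖sgrad f x v‖) • sgrad f x v)) v)
        (gradient (favg f) x) : ℝ)) 𝒟)
    (hgint : Integrable (fun v => sgrad f x v) 𝒟)
    (hgmean : ∫ v, sgrad f x v ∂𝒟 = gradient (favg f) x) :
    (∫ v, (inner ℝ (sgrad f (x + ρ • ((1 - lam + lam / ‖sgrad f x v‖) • sgrad f x v)) v)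
        (gradient (favg f) x) : ℝ) ∂𝒟 ≥
      (1 - β / 2) * ‖gradient (favg f) x‖ ^ 2 - Lmax ^ 2 * ρ ^ 2 * lam ^ 2 / β -
      Lmax ^ 2 * ρ ^ 2 * (1 - lam) ^ 2 / β * ∫ v, ‖sgrad f x v‖ ^ 2 ∂𝒟) ∧
    (0 < ρ →
      ∫ v, (inner ℝ (sgrad f (x + ρ • ((1 - lam + lam / ‖sgrad f x v‖) • sgrad f x v)) v)
        (gradient (favg f) x) : ℝ) ∂𝒟 ≥
      (1 - Lmax * ρ / 2) * ‖gradient (favg f) x‖ ^ 2 - Lmax * ρ * lam ^ 2 -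
      Lmax * ρ * (1 - lam) ^ 2 * ∫ v, ‖sgrad f x v‖ ^ 2 ∂𝒟) :=
  perturbed_sgrad_inner_product_general f L hLnonneg Lmax hLmax_mem 𝒟 hglip x ρ lam β hβ hint1 hint2
    hgint hgmean

end
end

section
/- (Descent recursion lemma.) Let (r_t)_{t≥0} and (δ_t)_{t≥0} be sequences of non-negative real numbers, let g > 1 and N ≥ 0, and let T ≥ 1 be an integer. If r_t ≤ g·δ_t − δ_{t+1} + N for all t = 0, 1, …, T−1, then min_{0≤t≤T−1} r_t ≤ (g^T/T)·δ_0 + N. -/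
/-!
Dividing the `t`-th inequality by `g ^ (t + 1)` makes the right-hand sides telescope:
`∑_{t<T} (r t - N) / g ^ (t + 1) ≤ δ 0 - δ T / g ^ T ≤ δ 0`. Each weight `1 / g ^ (t + 1)` is at
least `1 / g ^ T` because `g ≥ 1`, so bounding every `r t` below by the minimum `m` gives
`(m - N) * T / g ^ T ≤ δ 0` whenever `m ≥ N`.
-/

open Finset

variable {K : Type*} [Field K] [LinearOrder K] [IsStrictOrderedRing K]

theorem Finset.inf'_mul_sum_le_sum_mul {ι α : Type*} [Semiring α] [LinearOrder α]
    [IsOrderedRing α] (s : Finset ι) (hs : s.Nonempty) (f w : ι → α)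
    (hw : ∀ i ∈ s, 0 ≤ w i) :
    s.inf' hs f * ∑ i ∈ s, w i ≤ ∑ i ∈ s, f i * w i := by
  rw [mul_sum]
  exact sum_le_sum fun i hi => mul_le_mul_of_nonneg_right (inf'_le f hi) (hw i hi)

lemma sum_sub_mul_inv_pow_add_le {r δ : ℕ → K} {g N : K} (hg : 0 < g) (T : ℕ)
    (hrec : ∀ t < T, r t ≤ g * δ t - δ (t + 1) + N) :
    ∑ t ∈ range T, (r t - N) * (g ^ (t + 1))⁻¹ + δ T * (g ^ T)⁻¹ ≤ δ 0 := by
  induction T with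
  | zero => simp
  | succ T ih =>
    have hstep : (r T - N) * (g ^ (T + 1))⁻¹ + δ (T + 1) * (g ^ (T + 1))⁻¹ ≤
        δ T * (g ^ T)⁻¹ := by
      rw [← add_mul, pow_succ', mul_inv, ← mul_assoc]
      refine mul_le_mul_of_nonneg_right ?_ (by positivity)
      rw [mul_inv_le_iff₀ hg]
      linarith [hrec T T.lt_succ_self]
    rw [sum_range_succ]
    linarith [ih fun t ht => hrec t (ht.trans T.lt_succ_self)]

lemma card_div_pow_le_sum_inv_pow {g : K} (hg : 1 ≤ g) (T : ℕ) :
    T / g ^ T ≤ ∑ t ∈ range T, (g ^ (t + 1))⁻¹ := by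
  calc (T : K) / g ^ T = ∑ _t ∈ range T, (g ^ T)⁻¹ := by simp [div_eq_mul_inv]
    _ ≤ ∑ t ∈ range T, (g ^ (t + 1))⁻¹ := by
      refine sum_le_sum fun t ht => ?_
      gcongr
      exact mem_range.mp ht

/-- **Lemma (descent recursion).**  If non-negative sequences satisfy
`r t ≤ g • δ t − δ (t+1) + N` for `t = 0, …, T−1` with `g > 1` and `N ≥ 0`, then
`min_{0 ≤ t ≤ T−1} r t ≤ (g^T / T) δ 0 + N`. -/
theorem descent_recursion_lemma
    (r δ : ℕ → ℝ) (hδ : ∀ t, 0 ≤ δ t)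
    (g N : ℝ) (hg : 1 < g)
    (T : ℕ) (hT : 1 ≤ T)
    (hrec : ∀ t < T, r t ≤ g * δ t - δ (t + 1) + N) :
    (Finset.range T).inf' (Finset.nonempty_range_iff.mpr (by omega)) r ≤
      g ^ T / T * δ 0 + N := by
  set m := (range T).inf' (nonempty_range_iff.mpr (by omega)) r
  have hg0 : 0 < g := one_pos.trans hg
  rcases le_or_gt m N with hmN | hNm
  · have : 0 ≤ g ^ T / T * δ 0 := mul_nonneg (by positivity) (hδ 0)
    linarith
  set W := ∑ t ∈ range T, (g ^ (t + 1))⁻¹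
  have hweighted : (m - N) * W ≤ δ 0 := by
    have hmin := (range T).inf'_mul_sum_le_sum_mul (nonempty_range_iff.mpr (by omega)) r
      (fun t => (g ^ (t + 1))⁻¹) fun t _ => by positivity
    have htel := sum_sub_mul_inv_pow_add_le hg0 T hrec
    have hδT : 0 ≤ δ T * (g ^ T)⁻¹ := mul_nonneg (hδ T) (by positivity)
    simp only [sub_mul, sum_sub_distrib, ← mul_sum] at htel
    linarith
  have hbound : (m - N) * (T / g ^ T) ≤ δ 0 :=
    (mul_le_mul_of_nonneg_left (card_div_pow_le_sum_inv_pow hg.le T) (by linarith)).trans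
      hweighted
  calc m = (m - N) * (T / g ^ T) * (g ^ T / T) + N := by field_simp; ring
    _ ≤ δ 0 * (g ^ T / T) + N := by gcongr
    _ = g ^ T / T * δ 0 + N := by ring
end

section
/- (ER for τ-nice sampling.) Assume n ≥ 2, each f_i is L_i-smooth and bounded below with f_i* = inf_x f_i(x), and f attains its minimum at some point x*. Let 1 ≤ τ ≤ n and let 𝒟 be the τ-nice sampling distribution: v = (n/τ)∑_{i∈S} e_i where S is a uniformly random subset of {1,…,n} of size τ. Set σ* = (1/n)∑_{i=1}^n (f_i(x*) − f_i*), A = ((n−τ)/(τ(n−1)))·L_max, and B = n(τ−1)/(τ(n−1)). Then for all x ∈ ℝ^d, E_v‖g(x,v)‖² ≤ 2A·(f(x) − f^inf) + B·‖∇f(x)‖² + 2A·σ*; i.e., ER holds with constants A = (n−τ)L_max/(τ(n−1)), B = n(τ−1)/(τ(n−1)), C = 2Aσ*. -/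
/-!
Under `τ`-nice sampling, `E‖g(x,v)‖²` is the average of `‖τ⁻¹ ∑_{i∈S} ∇fᵢ(x)‖²` over the
`τ`-subsets `S`. A subset contains a given index with frequency `τ/n` and a given pair of distinct
indices with frequency `τ(τ-1)/(n(n-1))`, which yields the exact second moment
`τ n (n-1) E‖g‖² = (n-τ) ∑ᵢ ‖∇fᵢ(x)‖² + (τ-1) ‖∑ᵢ ∇fᵢ(x)‖²`.
The second term is `B‖∇f(x)‖²`. For the first, `Lᵢ`-smoothness and boundedness below give
`‖∇fᵢ(x)‖² ≤ 2Lᵢ(fᵢ(x) - fᵢ*)`, and `fᵢ(x) - fᵢ* = (fᵢ(x) - fᵢ(x*)) + (fᵢ(x*) - fᵢ*)` averages to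
`(f(x) - f^inf) + σ*`.
-/

open MeasureTheory Finset
open scoped NNReal ENNReal RealInnerProductSpace

noncomputable section

section Smooth

variable {E : Type*} [NormedAddCommGroup E] [InnerProductSpace ℝ E] [CompleteSpace E]
  {f : E → ℝ} {K : ℝ≥0}

theorem le_add_inner_gradient_add_sq (hf : Differentiable ℝ f)
    (hlip : LipschitzWith K (gradient f)) (x y : E) :
    f y ≤ f x + ⟪gradient f x, y - x⟫ + K / 2 * ‖y - x‖ ^ 2 := by
  set h := y - x
  set φ : ℝ → ℝ := fun t => f (x + t • h) - t * ⟪gradient f x, h⟫ - K / 2 * t ^ 2 * ‖h‖ ^ 2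
  have hφ : ∀ t, HasDerivAt φ (⟪gradient f (x + t • h) - gradient f x, h⟫ - K * t * ‖h‖ ^ 2) t := by
    intro t
    have hline : HasDerivAt (fun t : ℝ => x + t • h) h t := by
      simpa using ((hasDerivAt_id t).smul_const h).const_add x
    have hcomp := (hf (x + t • h)).hasGradientAt.hasFDerivAt.comp_hasDerivAt t hline
    refine ((hcomp.sub ((hasDerivAt_id t).mul_const ⟪gradient f x, h⟫)).sub
      (((hasDerivAt_pow 2 t).const_mul (K / 2 : ℝ)).mul_const (‖h‖ ^ 2))).congr_deriv ?_
    simp only [InnerProductSpace.toDual_apply_apply, inner_sub_left]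
    ring
  have hanti : AntitoneOn φ (Set.Ici 0) := by
    refine antitoneOn_of_hasDerivWithinAt_nonpos (convex_Ici 0)
      (fun t _ => (hφ t).continuousAt.continuousWithinAt) (fun t _ => (hφ t).hasDerivWithinAt) ?_
    intro t ht
    rw [interior_Ici, Set.mem_Ioi] at ht
    have hgrad : ‖gradient f (x + t • h) - gradient f x‖ ≤ K * (t * ‖h‖) := by
      simpa [norm_smul, abs_of_pos ht] using hlip.norm_sub_le (x + t • h) x
    rw [sub_nonpos]
    calc ⟪gradient f (x + t • h) - gradient f x, h⟫
        ≤ ‖gradient f (x + t • h) - gradient f x‖ * ‖h‖ := real_inner_le_norm _ _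
      _ ≤ K * (t * ‖h‖) * ‖h‖ := by gcongr
      _ = K * t * ‖h‖ ^ 2 := by ring
  have hφ01 : φ 1 ≤ φ 0 := hanti Set.self_mem_Ici (Set.mem_Ici.2 zero_le_one) zero_le_one
  simp only [φ, one_smul, zero_smul, add_zero, one_mul, one_pow, zero_mul, sub_zero,
    zero_pow two_ne_zero, mul_zero] at hφ01
  rw [show x + h = y by simp [h]] at hφ01
  linarith

theorem norm_gradient_sq_le_two_mul_sub_iInf (hf : Differentiable ℝ f)
    (hlip : LipschitzWith K (gradient f)) (hbdd : BddBelow (Set.range f)) (x : E) :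
    ‖gradient f x‖ ^ 2 ≤ 2 * K * (f x - ⨅ y, f y) := by
  -- a gradient step of any length `t` stays above `⨅ y, f y`
  have hstep : ∀ t : ℝ, t * ‖gradient f x‖ ^ 2 ≤
      (f x - ⨅ y, f y) + K / 2 * t ^ 2 * ‖gradient f x‖ ^ 2 := by
    intro t
    have hdesc := le_add_inner_gradient_add_sq hf hlip x (x - t • gradient f x)
    have hinf : ⨅ y, f y ≤ f (x - t • gradient f x) := ciInf_le hbdd _
    simp only [sub_sub_cancel_left, inner_neg_right, inner_smul_right, real_inner_self_eq_norm_sq,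
      norm_neg, norm_smul, Real.norm_eq_abs, mul_pow, sq_abs] at hdesc
    linarith
  rcases eq_zero_or_pos K with rfl | hK
  · simp only [NNReal.coe_zero, zero_div, zero_mul, mul_zero, add_zero] at hstep ⊢
    by_contra! hg
    have := hstep (((f x - ⨅ y, f y) + 1) / ‖gradient f x‖ ^ 2)
    rw [div_mul_cancel₀ _ hg.ne'] at this
    linarith
  · have hK' : (0 : ℝ) < K := hK
    have := hstep (1 / K)
    field_simp at this
    nlinarith

theorem sum_norm_gradient_sq_le {ι : Type*} [Fintype ι] {F : ι → E → ℝ} {L : ι → ℝ} {Lmax : ℝ}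
    (hL : ∀ i, 0 ≤ L i) (hLmax : ∀ i, L i ≤ Lmax) (hF : ∀ i, Differentiable ℝ (F i))
    (hlip : ∀ i, LipschitzWith (L i).toNNReal (gradient (F i)))
    (hbdd : ∀ i, BddBelow (Set.range (F i))) (x : E) :
    ∑ i, ‖gradient (F i) x‖ ^ 2 ≤ 2 * Lmax * ∑ i, (F i x - ⨅ y, F i y) := by
  rw [Finset.mul_sum]
  refine Finset.sum_le_sum fun i _ => ?_
  have hi := norm_gradient_sq_le_two_mul_sub_iInf (hF i) (hlip i) (hbdd i) x
  rw [Real.coe_toNNReal _ (hL i)] at hi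
  exact hi.trans (mul_le_mul_of_nonneg_right (by linarith [hLmax i])
    (sub_nonneg.2 (ciInf_le (hbdd i) x)))

end Smooth

namespace Finset

variable {ι : Type*} [Fintype ι] [DecidableEq ι]

theorem card_filter_powersetCard_superset_mul_choose (s : Finset ι) (τ : ℕ) :
    #{S ∈ powersetCard τ univ | s ⊆ S} * (Fintype.card ι).choose #s =
      (Fintype.card ι).choose τ * τ.choose #s := by
  by_cases hs : #s ≤ τ
  · rw [card_filter_powersetCard_subset s univ τ (subset_univ s) hs, card_univ, Nat.choose_mul hs,
      mul_comm]
  · have hempty : {S ∈ powersetCard τ (univ : Finset ι) | s ⊆ S} = ∅ := by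
      refine filter_eq_empty_iff.2 fun S hS hsS => hs ?_
      exact (card_le_card hsS).trans_eq (mem_powersetCard.1 hS).2
    rw [hempty, Nat.choose_eq_zero_of_lt (not_le.1 hs), card_empty, zero_mul, mul_zero]

theorem card_mul_pred_mul_card_filter_powersetCard_mem_and_mem (τ : ℕ) (i j : ι) :
    (Fintype.card ι : ℝ) * (Fintype.card ι - 1) * #{S ∈ powersetCard τ univ | i ∈ S ∧ j ∈ S} =
      (Fintype.card ι).choose τ * τ *
        ((if i = j then (Fintype.card ι : ℝ) - τ else 0) + (τ - 1)) := by
  by_cases hij : i = j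
  · subst hij
    have hcount := card_filter_powersetCard_superset_mul_choose {i} τ
    simp only [singleton_subset_iff, card_singleton, Nat.choose_one_right, and_self, if_true]
      at hcount ⊢
    have hcast := congrArg (Nat.cast : ℕ → ℝ) hcount
    push_cast at hcast
    linear_combination ((Fintype.card ι : ℝ) - 1) * hcast
  · have hcount := card_filter_powersetCard_superset_mul_choose {i, j} τ
    simp only [insert_subset_iff, singleton_subset_iff, card_pair hij] at hcount
    have hcast := congrArg (Nat.cast : ℕ → ℝ) hcount
    push_cast [Nat.cast_choose_two] at hcast
    rw [if_neg hij]
    linear_combination 2 * hcast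

variable {E : Type*} [NormedAddCommGroup E] [InnerProductSpace ℝ E]

theorem sum_norm_sum_sq_eq_sum_sum_card_mul_inner (𝒮 : Finset (Finset ι)) (a : ι → E) :
    ∑ S ∈ 𝒮, ‖∑ i ∈ S, a i‖ ^ 2 = ∑ i, ∑ j, #{S ∈ 𝒮 | i ∈ S ∧ j ∈ S} * ⟪a i, a j⟫ := by
  have hexpand : ∀ S : Finset ι,
      ‖∑ i ∈ S, a i‖ ^ 2 = ∑ i, ∑ j, if i ∈ S ∧ j ∈ S then ⟪a i, a j⟫ else 0 := by
    intro S
    rw [← real_inner_self_eq_norm_sq, sum_inner]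
    simp [inner_sum, ite_and, Finset.sum_ite_mem]
  simp_rw [hexpand]
  rw [sum_comm]
  refine sum_congr rfl fun i _ => ?_
  rw [sum_comm]
  refine sum_congr rfl fun j _ => ?_
  rw [← sum_filter, sum_const, nsmul_eq_mul]

theorem sum_sum_ite_add_mul_inner (p q : ℝ) (a : ι → E) :
    ∑ i, ∑ j, ((if i = j then p else 0) + q) * ⟪a i, a j⟫ =
      p * ∑ i, ‖a i‖ ^ 2 + q * ‖∑ i, a i‖ ^ 2 := by
  simp only [add_mul, sum_add_distrib, ite_mul, zero_mul, sum_ite_eq, mem_univ, if_true,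
    ← mul_sum, ← inner_sum, ← sum_inner, real_inner_self_eq_norm_sq]

theorem card_mul_pred_mul_sum_powersetCard_norm_sum_sq (τ : ℕ) (a : ι → E) :
    (Fintype.card ι : ℝ) * (Fintype.card ι - 1) * ∑ S ∈ powersetCard τ univ, ‖∑ i ∈ S, a i‖ ^ 2 =
      (Fintype.card ι).choose τ * τ *
        ((Fintype.card ι - τ) * ∑ i, ‖a i‖ ^ 2 + (τ - 1) * ‖∑ i, a i‖ ^ 2) := by
  simp_rw [sum_norm_sum_sq_eq_sum_sum_card_mul_inner, mul_sum, ← mul_assoc,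
    card_mul_pred_mul_card_filter_powersetCard_mem_and_mem, mul_assoc _ _ (⟪_, _⟫), ← mul_sum,
    sum_sum_ite_add_mul_inner]

end Finset

theorem integral_smul_sum_dirac {α β G : Type*} [MeasurableSpace α] [MeasurableSingletonClass α]
    [NormedAddCommGroup G] [NormedSpace ℝ G] [CompleteSpace G] (φ : α → G) (c : ℝ≥0∞)
    (s : Finset β) (w : β → α) :
    ∫ v, φ v ∂(c • ∑ b ∈ s, Measure.dirac (w b)) = c.toReal • ∑ b ∈ s, φ (w b) := by
  rw [integral_smul_measure, integral_finsetSum_measure fun b _ => integrable_dirac enorm_lt_top]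
  simp only [integral_dirac]

def tauNice (n τ : ℕ) : Measure (Fin n → ℝ) :=
  ((n.choose τ : ℝ≥0∞))⁻¹ • ∑ S ∈ powersetCard τ univ,
    Measure.dirac (fun i => if i ∈ S then (n : ℝ) / τ else 0)

section StochasticGradient

variable {n d : ℕ}

theorem sgrad_ite_mem (f : Fin n → EuclideanSpace ℝ (Fin d) → ℝ) (x : EuclideanSpace ℝ (Fin d))
    (S : Finset (Fin n)) (c : ℝ) :
    sgrad f x (fun i => if i ∈ S then c else 0) = ((n : ℝ)⁻¹ * c) • ∑ i ∈ S, gradient (f i) x := by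
  simp only [sgrad, ite_smul, zero_smul, sum_ite_mem, univ_inter, smul_sum, smul_smul]

theorem gradient_favg (f : Fin n → EuclideanSpace ℝ (Fin d) → ℝ)
    (hf : ∀ i, Differentiable ℝ (f i)) (x : EuclideanSpace ℝ (Fin d)) :
    gradient (favg f) x = (n : ℝ)⁻¹ • ∑ i, gradient (f i) x := by
  have hderiv : HasFDerivAt (favg f) ((n : ℝ)⁻¹ • ∑ i, fderiv ℝ (f i) x) x :=
    (HasFDerivAt.fun_sum fun i _ => (hf i x).hasFDerivAt).const_mul _
  simp only [gradient, hderiv.fderiv, map_smul, map_sum]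

theorem mul_integral_norm_sq_sgrad_tauNice {τ : ℕ} (hτ : 0 < τ) (hτn : τ ≤ n)
    (f : Fin n → EuclideanSpace ℝ (Fin d) → ℝ) (x : EuclideanSpace ℝ (Fin d)) :
    τ * n * (n - 1) * ∫ v, ‖sgrad f x v‖ ^ 2 ∂tauNice n τ =
      (n - τ) * ∑ i, ‖gradient (f i) x‖ ^ 2 + (τ - 1) * ‖∑ i, gradient (f i) x‖ ^ 2 := by
  have hN : (n.choose τ : ℝ) ≠ 0 := Nat.cast_ne_zero.2 (Nat.choose_pos hτn).ne'
  have hτ0 : (τ : ℝ) ≠ 0 := Nat.cast_ne_zero.2 hτ.ne'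
  have hn0 : (n : ℝ) ≠ 0 := Nat.cast_ne_zero.2 (hτ.trans_le hτn).ne'
  have hmoment := card_mul_pred_mul_sum_powersetCard_norm_sum_sq τ fun i => gradient (f i) x
  rw [Fintype.card_fin] at hmoment
  rw [tauNice, integral_smul_sum_dirac]
  simp only [sgrad_ite_mem, norm_smul, mul_pow, Real.norm_eq_abs, sq_abs, ← mul_sum,
    ENNReal.toReal_inv, ENNReal.toReal_natCast, smul_eq_mul]
  field_simp
  linear_combination hmoment

end StochasticGradient

theorem ER_of_tau_nice_sampling_general
    {d n : ℕ} (hn : 2 ≤ n)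
    (f : Fin n → EuclideanSpace ℝ (Fin d) → ℝ)
    (L : Fin n → ℝ) (hLnonneg : ∀ i, 0 ≤ L i)
    (hdiff : ∀ i, Differentiable ℝ (f i))
    (hsmooth : ∀ i, LipschitzWith (L i).toNNReal (gradient (f i)))
    (hbelow : ∀ i, BddBelow (Set.range (f i)))
    (Lmax : ℝ) (hLmax_ub : ∀ i, L i ≤ Lmax)
    (xstar : EuclideanSpace ℝ (Fin d)) (hmin : ∀ y, favg f xstar ≤ favg f y)
    -- the batch size
    (τ : ℕ) (hτ1 : 1 ≤ τ) (hτn : τ ≤ n)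
    -- the τ-nice sampling distribution
    (𝒟 : Measure (Fin n → ℝ))
    (h𝒟 : 𝒟 = ((n.choose τ : ENNReal))⁻¹ •
      ∑ S ∈ Finset.powersetCard τ (Finset.univ : Finset (Fin n)),
        Measure.dirac (fun i => if i ∈ S then (n : ℝ) / (τ : ℝ) else 0))
    -- `σ*`, `A` and `B`
    (σstar A B : ℝ)
    (hσstar : σstar = (n : ℝ)⁻¹ * ∑ i, (f i xstar - ⨅ y, f i y))
    (hAdef : A = ((n : ℝ) - τ) * Lmax / ((τ : ℝ) * ((n : ℝ) - 1)))
    (hBdef : B = (n : ℝ) * ((τ : ℝ) - 1) / ((τ : ℝ) * ((n : ℝ) - 1))) :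
    ∀ x, ∫ v, ‖sgrad f x v‖ ^ 2 ∂𝒟 ≤
      2 * A * (favg f x - ⨅ y, favg f y) + B * ‖gradient (favg f) x‖ ^ 2 + 2 * A * σstar := by
  intro x
  obtain rfl : 𝒟 = tauNice n τ := h𝒟
  have hn1 : (0 : ℝ) < n - 1 := sub_pos.2 (Nat.one_lt_cast.2 hn)
  have hτn' : (τ : ℝ) ≤ n := by exact_mod_cast hτn
  have hmoment := mul_integral_norm_sq_sgrad_tauNice hτ1 hτn f x
  have hsum : ∑ i, gradient (f i) x = (n : ℝ) • gradient (favg f) x := by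
    rw [gradient_favg f hdiff x, smul_inv_smul₀ (by positivity)]
  rw [hsum, norm_smul, Real.norm_natCast] at hmoment
  have hgrad := sum_norm_gradient_sq_le hLnonneg hLmax_ub hdiff hsmooth hbelow x
  have hinf : ⨅ y, favg f y = favg f xstar :=
    le_antisymm (ciInf_le ⟨favg f xstar, Set.forall_mem_range.2 hmin⟩ xstar) (le_ciInf hmin)
  have hsplit : ∑ i, (f i x - ⨅ y, f i y) = n * (favg f x - favg f xstar) + n * σstar := by
    simp only [favg, hσstar, sum_sub_distrib]
    field_simp
    ring
  have hpos : (0 : ℝ) < τ * n * (n - 1) := mul_pos (by positivity) hn1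
  rw [hinf]
  refine le_of_mul_le_mul_left ?_ hpos
  calc τ * n * (n - 1) * ∫ v, ‖sgrad f x v‖ ^ 2 ∂tauNice n τ
      = (n - τ) * ∑ i, ‖gradient (f i) x‖ ^ 2 + (τ - 1) * (n * ‖gradient (favg f) x‖) ^ 2 :=
        hmoment
    _ ≤ (n - τ) * (2 * Lmax * (n * (favg f x - favg f xstar) + n * σstar)) +
          (τ - 1) * (n * ‖gradient (favg f) x‖) ^ 2 := by
        rw [← hsplit]
        gcongr
    _ = τ * n * (n - 1) * (2 * A * (favg f x - favg f xstar) + B * ‖gradient (favg f) x‖ ^ 2 +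
          2 * A * σstar) := by
        rw [hAdef, hBdef]
        field_simp [hn1.ne']
        ring

/-- **Proposition (ER for τ-nice sampling), with
`A = (n−τ)·Lmax/(τ(n−1))`, `B = n(τ−1)/(τ(n−1))`, `C = 2·A·σ*`.**
The `τ`-nice distribution is uniform over the `n.choose τ` vectors `(n/τ)·∑_{i∈S} e i`,
`S ⊆ {1,…,n}` of cardinality `τ`. -/
theorem ER_of_tau_nice_sampling
    {d n : ℕ} (hn : 2 ≤ n)
    (f : Fin n → EuclideanSpace ℝ (Fin d) → ℝ)
    (L : Fin n → ℝ) (hLnonneg : ∀ i, 0 ≤ L i)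
    (hdiff : ∀ i, Differentiable ℝ (f i))
    (hsmooth : ∀ i, LipschitzWith (L i).toNNReal (gradient (f i)))
    (hbelow : ∀ i, BddBelow (Set.range (f i)))
    (Lmax : ℝ) (hLmax_ub : ∀ i, L i ≤ Lmax) (hLmax_mem : ∃ i, L i = Lmax)
    (xstar : EuclideanSpace ℝ (Fin d)) (hmin : ∀ y, favg f xstar ≤ favg f y)
    -- the batch size
    (τ : ℕ) (hτ1 : 1 ≤ τ) (hτn : τ ≤ n)
    -- the τ-nice sampling distribution
    (𝒟 : Measure (Fin n → ℝ))
    (h𝒟 : 𝒟 = ((n.choose τ : ENNReal))⁻¹ •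
      ∑ S ∈ Finset.powersetCard τ (Finset.univ : Finset (Fin n)),
        Measure.dirac (fun i => if i ∈ S then (n : ℝ) / (τ : ℝ) else 0))
    -- `σ*`, `A` and `B`
    (σstar A B : ℝ)
    (hσstar : σstar = (n : ℝ)⁻¹ * ∑ i, (f i xstar - ⨅ y, f i y))
    (hAdef : A = ((n : ℝ) - τ) * Lmax / ((τ : ℝ) * ((n : ℝ) - 1)))
    (hBdef : B = (n : ℝ) * ((τ : ℝ) - 1) / ((τ : ℝ) * ((n : ℝ) - 1))) :
    ∀ x, ∫ v, ‖sgrad f x v‖ ^ 2 ∂𝒟 ≤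
      2 * A * (favg f x - ⨅ y, favg f y) + B * ‖gradient (favg f) x‖ ^ 2 + 2 * A * σstar :=
  ER_of_tau_nice_sampling_general hn f L hLnonneg hdiff hsmooth hbelow Lmax hLmax_ub xstar hmin τ
    hτ1 hτn 𝒟 h𝒟 σstar A B hσstar hAdef hBdef
end
end
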